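/- arXiv:2012.12166 — 11 statements merged into one kernel-verified Lean document; each statement's English description precedes it below -/
import Mathlib

section
/- For every (g₁, g₂) ∈ SL(2,ℂ) × SL(2,ℂ), the linear action Q ↦ g₁ Q g₂⁻¹ on M₂(ℂ) ≅ ℂ⁴ preserves the determinant, i.e. the complex quadratic form u² + v² + w² + z² under the biquaternion identification; moreover g₁ Q g₂⁻¹ = Q holds for all Q ∈ M₂(ℂ) if and only if (g₁, g₂) = (1,1) or (g₁, g₂) = (-1,-1). Consequently this action defines a group homomorphism from SL(2,ℂ) × SL(2,ℂ) to the orthogonal group of the standard complex quadratic form on ℂ⁴ whose kernel is {(1,1), (-1,-1)}. -/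
open Matrix

/-- The biquaternion identification of `ℂ⁴` with `M₂(ℂ)`,
sending `(u,v,w,z)` to `[[u+iv, w+iz],[-w+iz, u-iv]]`. -/
noncomputable def biqOfVec (p : Fin 4 → ℂ) : Matrix (Fin 2) (Fin 2) ℂ :=
  !![p 0 + Complex.I * p 1, p 2 + Complex.I * p 3;
     -p 2 + Complex.I * p 3, p 0 - Complex.I * p 1]

/-- The standard complex quadratic form `u² + v² + w² + z²` on `ℂ⁴`. -/
def stdQuadForm (p : Fin 4 → ℂ) : ℂ := p 0 ^ 2 + p 1 ^ 2 + p 2 ^ 2 + p 3 ^ 2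

/-- The orthogonal group of the standard complex quadratic form on `ℂ⁴`, realised as the
subgroup of linear automorphisms of `ℂ⁴` preserving `stdQuadForm`. -/
noncomputable def stdOrthogonalGroup : Subgroup ((Fin 4 → ℂ) ≃ₗ[ℂ] (Fin 4 → ℂ)) where
  carrier := {A | ∀ p, stdQuadForm (A p) = stdQuadForm p}
  mul_mem' := by
    intro A B hA hB p
    have : (A * B) p = A (B p) := rfl
    rw [this, hA, hB]
  one_mem' := by intro p; rfl
  inv_mem' := by
    intro A hA p
    have h := hA (A⁻¹ p)
    have h2 : A (A⁻¹ p) = p := A.apply_symm_apply p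
    rw [h2] at h
    exact h.symm

/-!
Both factors act by matrices of determinant one, so `Q ↦ g₁ Q g₂⁻¹` preserves `det`, which in
the biquaternion coordinates is `u² + v² + w² + z²`; transporting the action along the linear
isomorphism `ℂ⁴ ≃ M₂(ℂ)` gives the homomorphism into the orthogonal group, with the same kernel.
If `g₁ Q g₂⁻¹ = Q` for all `Q`, then `Q = 1` forces `g₁ = g₂`, so `g₁` commutes with every matrix
and is a scalar `r` with `r² = det g₁ = 1`, i.e. `g₁ = ±1`.
-/

namespace LinearEquiv

variable {R M N : Type*} [Semiring R] [AddCommMonoid M] [AddCommMonoid N] [Module R M]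
  [Module R N]

def autCongr (e : M ≃ₗ[R] N) : (M ≃ₗ[R] M) ≃* (N ≃ₗ[R] N) where
  toFun f := e.symm ≪≫ₗ f ≪≫ₗ e
  invFun f := e ≪≫ₗ f ≪≫ₗ e.symm
  left_inv f := by ext; simp
  right_inv f := by ext; simp
  map_mul' f g := by ext; simp

end LinearEquiv

namespace Matrix.SpecialLinearGroup

section

variable {n R : Type*} [Fintype n] [DecidableEq n] [CommRing R]

local notation:1024 "↑ₘ" A:1024 => ((A : SpecialLinearGroup n R) : Matrix n n R)

theorem det_mul_mul_inv (g₁ g₂ : SpecialLinearGroup n R) (Q : Matrix n n R) :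
    det (↑ₘg₁ * Q * ↑ₘ(g₂⁻¹)) = det Q := by
  rw [det_mul, det_mul, g₁.det_coe, (g₂⁻¹).det_coe, one_mul, mul_one]

theorem coe_mul_coe_inv (g : SpecialLinearGroup n R) : ↑ₘg * ↑ₘ(g⁻¹) = 1 := by
  rw [← coe_mul, mul_inv_cancel, coe_one]

theorem coe_inv_mul_coe (g : SpecialLinearGroup n R) : ↑ₘ(g⁻¹) * ↑ₘg = 1 := by
  rw [← coe_mul, inv_mul_cancel, coe_one]

def leftRightMul : SpecialLinearGroup n R × SpecialLinearGroup n R →*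
    (Matrix n n R ≃ₗ[R] Matrix n n R) where
  toFun g :=
    { toFun Q := ↑ₘg.1 * Q * ↑ₘ(g.2⁻¹)
      invFun Q := ↑ₘ(g.1⁻¹) * Q * ↑ₘg.2
      map_add' Q Q' := by simp [mul_add, add_mul]
      map_smul' c Q := by simp
      left_inv Q := by
        dsimp only
        rw [← mul_assoc, ← mul_assoc, coe_inv_mul_coe, one_mul, mul_assoc, coe_inv_mul_coe,
          mul_one]
      right_inv Q := by
        dsimp only
        rw [← mul_assoc, ← mul_assoc, coe_mul_coe_inv, one_mul, mul_assoc, coe_mul_coe_inv,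
          mul_one] }
  map_one' := by ext; simp
  map_mul' g h := by ext; simp [mul_assoc]

@[simp]
theorem leftRightMul_apply (g : SpecialLinearGroup n R × SpecialLinearGroup n R)
    (Q : Matrix n n R) : leftRightMul g Q = ↑ₘg.1 * Q * ↑ₘ(g.2⁻¹) :=
  rfl

theorem mem_ker_leftRightMul_iff (g : SpecialLinearGroup n R × SpecialLinearGroup n R) :
    g ∈ leftRightMul.ker ↔ ∀ Q : Matrix n n R, ↑ₘg.1 * Q * ↑ₘ(g.2⁻¹) = Q := by
  rw [MonoidHom.mem_ker, LinearEquiv.ext_iff]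
  rfl

theorem forall_mul_mul_inv_eq_iff (g₁ g₂ : SpecialLinearGroup n R) :
    (∀ Q : Matrix n n R, ↑ₘg₁ * Q * ↑ₘ(g₂⁻¹) = Q) ↔
      g₁ = g₂ ∧ (g₁ : Matrix n n R) ∈ Set.center (Matrix n n R) := by
  constructor
  · intro h
    have hg : g₁ = g₂ := by
      have h1 := h 1
      rw [mul_one, ← coe_mul, ← coe_one] at h1
      exact mul_inv_eq_one.mp (Subtype.ext h1)
    subst hg
    refine ⟨rfl, Semigroup.mem_center_iff.mpr fun Q => ?_⟩
    calc Q * ↑ₘg₁ = ↑ₘg₁ * Q * ↑ₘ(g₁⁻¹) * ↑ₘg₁ := by rw [h Q]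
      _ = ↑ₘg₁ * Q := by rw [mul_assoc, coe_inv_mul_coe, mul_one]
  · rintro ⟨rfl, hc⟩ Q
    rw [← Semigroup.mem_center_iff.mp hc Q, mul_assoc, coe_mul_coe_inv, mul_one]

end

section FinTwo

variable {R : Type*} [CommRing R] [IsDomain R]

theorem coe_mem_center_iff_of_fin_two (g : SpecialLinearGroup (Fin 2) R) :
    (g : Matrix (Fin 2) (Fin 2) R) ∈ Set.center (Matrix (Fin 2) (Fin 2) R) ↔
      (g : Matrix (Fin 2) (Fin 2) R) = 1 ∨ (g : Matrix (Fin 2) (Fin 2) R) = -1 := by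
  rw [center_eq_scalar_image, Set.center_eq_univ, Set.image_univ]
  constructor
  · rintro ⟨r, hr⟩
    have hr2 : r ^ 2 = 1 := by
      rw [← g.det_coe, ← hr, scalar_apply, det_diagonal, Fin.prod_univ_two, sq]
    rcases sq_eq_one_iff.mp hr2 with rfl | rfl
    · exact .inl (by rw [← hr, map_one])
    · exact .inr (by rw [← hr, map_neg, map_one])
  · rintro (h | h)
    · exact ⟨1, by rw [h, map_one]⟩
    · exact ⟨-1, by rw [h, map_neg, map_one]⟩

theorem forall_mul_mul_inv_eq_iff_of_fin_two (g₁ g₂ : SpecialLinearGroup (Fin 2) R) :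
    (∀ Q : Matrix (Fin 2) (Fin 2) R,
        (g₁ : Matrix (Fin 2) (Fin 2) R) * Q * ((g₂⁻¹ : SpecialLinearGroup (Fin 2) R) :
          Matrix (Fin 2) (Fin 2) R) = Q) ↔
      ((g₁ : Matrix (Fin 2) (Fin 2) R) = 1 ∧ (g₂ : Matrix (Fin 2) (Fin 2) R) = 1) ∨
        ((g₁ : Matrix (Fin 2) (Fin 2) R) = -1 ∧ (g₂ : Matrix (Fin 2) (Fin 2) R) = -1) := by
  rw [forall_mul_mul_inv_eq_iff, coe_mem_center_iff_of_fin_two]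
  constructor
  · rintro ⟨rfl, h | h⟩
    · exact .inl ⟨h, h⟩
    · exact .inr ⟨h, h⟩
  · rintro (⟨h₁, h₂⟩ | ⟨h₁, h₂⟩)
    · exact ⟨Subtype.ext (h₁.trans h₂.symm), .inl h₁⟩
    · exact ⟨Subtype.ext (h₁.trans h₂.symm), .inr h₁⟩

end FinTwo

end Matrix.SpecialLinearGroup

theorem det_biqOfVec (p : Fin 4 → ℂ) : (biqOfVec p).det = stdQuadForm p := by
  rw [biqOfVec, det_fin_two_of, stdQuadForm]
  linear_combination -(p 1 ^ 2 + p 3 ^ 2) * Complex.I_sq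

noncomputable def vecOfBiq (Q : Matrix (Fin 2) (Fin 2) ℂ) : Fin 4 → ℂ :=
  ![(Q 0 0 + Q 1 1) / 2, -Complex.I * (Q 0 0 - Q 1 1) / 2,
    (Q 0 1 - Q 1 0) / 2, -Complex.I * (Q 0 1 + Q 1 0) / 2]

noncomputable def biqEquiv : (Fin 4 → ℂ) ≃ₗ[ℂ] Matrix (Fin 2) (Fin 2) ℂ where
  toFun := biqOfVec
  invFun := vecOfBiq
  map_add' p q := by
    ext i j
    fin_cases i <;> fin_cases j <;> simp [biqOfVec] <;> ring
  map_smul' c p := by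
    ext i j
    fin_cases i <;> fin_cases j <;> simp [biqOfVec] <;> ring
  left_inv p := by
    ext i
    fin_cases i <;> simp [biqOfVec, vecOfBiq] <;> ring_nf <;> simp only [Complex.I_sq] <;> ring
  right_inv Q := by
    ext i j
    fin_cases i <;> fin_cases j <;> simp [biqOfVec, vecOfBiq] <;> ring_nf <;>
      simp only [Complex.I_sq] <;> ring

theorem stdQuadForm_eq_det (p : Fin 4 → ℂ) : stdQuadForm p = (biqEquiv p).det :=
  (det_biqOfVec p).symm

noncomputable def biqRep :
    (Matrix.SpecialLinearGroup (Fin 2) ℂ × Matrix.SpecialLinearGroup (Fin 2) ℂ) →*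
      stdOrthogonalGroup :=
  (biqEquiv.symm.autCongr.toMonoidHom.comp SpecialLinearGroup.leftRightMul).codRestrict
    stdOrthogonalGroup fun g p => by
      change stdQuadForm (biqEquiv.symm (SpecialLinearGroup.leftRightMul g (biqEquiv p))) = _
      rw [stdQuadForm_eq_det, stdQuadForm_eq_det, LinearEquiv.apply_symm_apply,
        SpecialLinearGroup.leftRightMul_apply, SpecialLinearGroup.det_mul_mul_inv]

theorem biqOfVec_biqRep
    (g : Matrix.SpecialLinearGroup (Fin 2) ℂ × Matrix.SpecialLinearGroup (Fin 2) ℂ)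
    (p : Fin 4 → ℂ) :
    biqOfVec ((biqRep g : (Fin 4 → ℂ) ≃ₗ[ℂ] (Fin 4 → ℂ)) p) =
      (g.1 : Matrix (Fin 2) (Fin 2) ℂ) * biqOfVec p *
        ((g.2⁻¹ : Matrix.SpecialLinearGroup (Fin 2) ℂ) : Matrix (Fin 2) (Fin 2) ℂ) :=
  biqEquiv.apply_symm_apply _

theorem ker_biqRep : biqRep.ker = SpecialLinearGroup.leftRightMul.ker :=
  (MonoidHom.ker_codRestrict _ _ _).trans
    (MonoidHom.ker_comp_of_injective _ _ biqEquiv.symm.autCongr.injective)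

/-- for every `(g₁,g₂) ∈ SL(2,ℂ) × SL(2,ℂ)`, the action `Q ↦ g₁ Q g₂⁻¹`
on `M₂(ℂ) ≅ ℂ⁴` preserves the determinant, i.e. the standard complex quadratic form
under the biquaternion identification; `g₁ Q g₂⁻¹ = Q` for all `Q` iff
`(g₁,g₂) = (1,1)` or `(g₁,g₂) = (-1,-1)`; and consequently the action defines a group
homomorphism to the orthogonal group of the standard quadratic form on `ℂ⁴` with
kernel `{(1,1), (-1,-1)}`. -/
theorem sl2_times_sl2_action_preserves_det :
    (∀ (g₁ g₂ : Matrix.SpecialLinearGroup (Fin 2) ℂ) (Q : Matrix (Fin 2) (Fin 2) ℂ),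
      ((g₁ : Matrix (Fin 2) (Fin 2) ℂ) * Q *
        ((g₂⁻¹ : Matrix.SpecialLinearGroup (Fin 2) ℂ) : Matrix (Fin 2) (Fin 2) ℂ)).det = Q.det)
    ∧ (∀ p : Fin 4 → ℂ, (biqOfVec p).det = stdQuadForm p)
    ∧ (∀ g₁ g₂ : Matrix.SpecialLinearGroup (Fin 2) ℂ,
        (∀ Q : Matrix (Fin 2) (Fin 2) ℂ,
            (g₁ : Matrix (Fin 2) (Fin 2) ℂ) * Q *
              ((g₂⁻¹ : Matrix.SpecialLinearGroup (Fin 2) ℂ) : Matrix (Fin 2) (Fin 2) ℂ) = Q)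
          ↔ (((g₁ : Matrix (Fin 2) (Fin 2) ℂ) = 1 ∧ (g₂ : Matrix (Fin 2) (Fin 2) ℂ) = 1)
              ∨ ((g₁ : Matrix (Fin 2) (Fin 2) ℂ) = -1 ∧ (g₂ : Matrix (Fin 2) (Fin 2) ℂ) = -1)))
    ∧ ∃ φ : (Matrix.SpecialLinearGroup (Fin 2) ℂ × Matrix.SpecialLinearGroup (Fin 2) ℂ) →*
          stdOrthogonalGroup,
        (∀ (g : Matrix.SpecialLinearGroup (Fin 2) ℂ × Matrix.SpecialLinearGroup (Fin 2) ℂ)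
            (p : Fin 4 → ℂ),
          biqOfVec (((φ g : ((Fin 4 → ℂ) ≃ₗ[ℂ] (Fin 4 → ℂ)))) p)
            = (g.1 : Matrix (Fin 2) (Fin 2) ℂ) * biqOfVec p *
                ((g.2⁻¹ : Matrix.SpecialLinearGroup (Fin 2) ℂ) : Matrix (Fin 2) (Fin 2) ℂ))
        ∧ (∀ g : Matrix.SpecialLinearGroup (Fin 2) ℂ × Matrix.SpecialLinearGroup (Fin 2) ℂ,
            g ∈ φ.ker
              ↔ (((g.1 : Matrix (Fin 2) (Fin 2) ℂ) = 1 ∧ (g.2 : Matrix (Fin 2) (Fin 2) ℂ) = 1)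
                ∨ ((g.1 : Matrix (Fin 2) (Fin 2) ℂ) = -1
                    ∧ (g.2 : Matrix (Fin 2) (Fin 2) ℂ) = -1))) := by
  refine ⟨SpecialLinearGroup.det_mul_mul_inv, det_biqOfVec,
    SpecialLinearGroup.forall_mul_mul_inv_eq_iff_of_fin_two, biqRep, biqOfVec_biqRep,
    fun g => ?_⟩
  rw [ker_biqRep, SpecialLinearGroup.mem_ker_leftRightMul_iff,
    SpecialLinearGroup.forall_mul_mul_inv_eq_iff_of_fin_two]
end

section
/- Let m₁, m₂ > 0, let ψ > 0, and let f be a nonzero real number. Set N = [[0,1],[0,0]] and q_R = cosh(ψ)·1 + i sinh(ψ)·I = diag(e^{-ψ}, e^{ψ}), so that Im(q_R) = diag(-sinh ψ, sinh ψ). Then there exist no traceless matrices L₁, L₂ ∈ M₂(ℂ) satisfying [N, L₁] = f·Im(q_R), [N, L₂] = -f·Im(q_R), and [N, q_R] = -(1/m₁) L₁ q_R + (1/m₂) q_R L₂. In particular, for a strictly attractive potential there are no parabolic relative equilibria of the 2-body problem on hyperbolic 3-space. -/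
open Matrix

/-!
Only the lower-left entries matter. Commuting with `N = [[0,1],[0,0]]` reads off the lower-left
entry of `Lᵢ` in the `(0,0)` slot and kills the lower-left entry, so the first two equations give
`L₁ 1 0 = -f sinh ψ` and `L₂ 1 0 = f sinh ψ`, and the lower-left entry of the third one becomes
`0 = f sinh ψ (e^{-ψ}/m₁ + e^{ψ}/m₂)`, whose right side is nonzero.
-/

section FinTwo

variable {R : Type*}

theorem nilpotent_commutator_apply_zero_zero [NonAssocRing R] (L : Matrix (Fin 2) (Fin 2) R) :
    (!![0, 1; 0, 0] * L - L * !![0, 1; 0, 0] : Matrix (Fin 2) (Fin 2) R) 0 0 = L 1 0 := by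
  simp [Matrix.sub_apply, Matrix.mul_apply, Fin.sum_univ_two, vecMul, dotProduct,
    -Matrix.cons_val']

theorem nilpotent_commutator_apply_one_zero [NonAssocRing R] (L : Matrix (Fin 2) (Fin 2) R) :
    (!![0, 1; 0, 0] * L - L * !![0, 1; 0, 0] : Matrix (Fin 2) (Fin 2) R) 1 0 = 0 := by
  simp [Matrix.sub_apply, Matrix.mul_apply, Fin.sum_univ_two, vecMul, dotProduct]

theorem mul_diag_fin_two_apply_one_zero [NonUnitalNonAssocSemiring R]
    (L : Matrix (Fin 2) (Fin 2) R) (a b : R) :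
    (L * (!![a, 0; 0, b] : Matrix (Fin 2) (Fin 2) R)) 1 0 = L 1 0 * a := by
  simp [Matrix.mul_apply, Fin.sum_univ_two]

theorem diag_fin_two_mul_apply_one_zero [NonUnitalNonAssocSemiring R]
    (L : Matrix (Fin 2) (Fin 2) R) (a b : R) :
    ((!![a, 0; 0, b] : Matrix (Fin 2) (Fin 2) R) * L) 1 0 = b * L 1 0 := by
  simp [Matrix.mul_apply, Fin.sum_univ_two]

end FinTwo

/-- there are no parabolic relative equilibria — no traceless `L₁, L₂`
satisfy the relative equilibrium equations generated by the nilpotent element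
`N = [[0,1],[0,0]]` with `q_R = diag(e^{-ψ}, e^{ψ})` when `ψ > 0`, the masses are
positive and `f ≠ 0` (strictly attractive potential). -/
theorem no_parabolic_relative_equilibria
    (m₁ m₂ ψ f : ℝ) (hm₁ : 0 < m₁) (hm₂ : 0 < m₂) (hψ : 0 < ψ) (hf : f ≠ 0) :
    let N : Matrix (Fin 2) (Fin 2) ℂ := !![0, 1; 0, 0]
    let qR : Matrix (Fin 2) (Fin 2) ℂ := !![(Real.exp (-ψ) : ℂ), 0; 0, (Real.exp ψ : ℂ)]
    let ImqR : Matrix (Fin 2) (Fin 2) ℂ := !![(-(Real.sinh ψ) : ℂ), 0; 0, (Real.sinh ψ : ℂ)]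
    ¬ ∃ L₁ L₂ : Matrix (Fin 2) (Fin 2) ℂ, L₁.trace = 0 ∧ L₂.trace = 0
        ∧ N * L₁ - L₁ * N = (f : ℂ) • ImqR
        ∧ N * L₂ - L₂ * N = (-(f : ℂ)) • ImqR
        ∧ N * qR - qR * N = (-(1 / (m₁ : ℂ))) • (L₁ * qR) + (1 / (m₂ : ℂ)) • (qR * L₂) := by
  intro N qR ImqR
  rintro ⟨L₁, L₂, -, -, h₁, h₂, hq⟩
  have hL₁ : L₁ 1 0 = -(f * Real.sinh ψ) := by
    have h := congrFun₂ h₁ 0 0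
    rw [nilpotent_commutator_apply_zero_zero] at h
    simpa [ImqR] using h
  have hL₂ : L₂ 1 0 = f * Real.sinh ψ := by
    have h := congrFun₂ h₂ 0 0
    rw [nilpotent_commutator_apply_zero_zero] at h
    simpa [ImqR] using h
  have hlower := congrFun₂ hq 1 0
  rw [nilpotent_commutator_apply_one_zero, Matrix.add_apply, Matrix.smul_apply, Matrix.smul_apply,
    mul_diag_fin_two_apply_one_zero, diag_fin_two_mul_apply_one_zero, hL₁, hL₂] at hlower
  have hpos : 0 < Real.sinh ψ * (Real.exp (-ψ) / m₁ + Real.exp ψ / m₂) :=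
    mul_pos (Real.sinh_pos_iff.2 hψ) (by positivity)
  have hzero : ((f * (Real.sinh ψ * (Real.exp (-ψ) / m₁ + Real.exp ψ / m₂)) : ℝ) : ℂ) = 0 := by
    have hm₁ℂ : (m₁ : ℂ) ≠ 0 := by exact_mod_cast hm₁.ne'
    have hm₂ℂ : (m₂ : ℂ) ≠ 0 := by exact_mod_cast hm₂.ne'
    push_cast [smul_eq_mul] at hlower ⊢
    field_simp at hlower ⊢
    linear_combination -hlower
  exact mul_ne_zero hf hpos.ne' (by exact_mod_cast hzero)
end

section
/- For all masses m₁, m₂ > 0 and all ψ > 0 there exists a unique pair of positive real numbers (χ₁, χ₂) satisfying χ₁ + χ₂ = ψ and m₁ sinh(2χ₁) = m₂ sinh(2χ₂). -/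
/-! Fixing `χ₂ = ψ - χ₁`, the balance `m₁ sinh 2χ₁ - m₂ sinh 2(ψ - χ₁)` is strictly increasing
in `χ₁`, negative at `0` and positive at `ψ`; by the intermediate value theorem it has exactly one
zero, and it lies in `(0, ψ)`. -/

open Real Set

theorem existsUnique_mem_Ioo_eq_of_strictMonoOn {α δ : Type*} [ConditionallyCompleteLinearOrder α]
    [TopologicalSpace α] [OrderTopology α] [DenselyOrdered α] [LinearOrder δ] [TopologicalSpace δ]
    [OrderClosedTopology δ] {f : α → δ} {a b : α} {c : δ} (hab : a ≤ b)
    (hf : StrictMonoOn f (Icc a b)) (hcont : ContinuousOn f (Icc a b)) (ha : f a < c)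
    (hb : c < f b) : ∃! x, x ∈ Ioo a b ∧ f x = c := by
  obtain ⟨x, hx, hfx⟩ := intermediate_value_Ioo hab hcont ⟨ha, hb⟩
  exact ⟨x, ⟨hx, hfx⟩, fun y ⟨hy, hfy⟩ =>
    hf.injOn (Ioo_subset_Icc_self hy) (Ioo_subset_Icc_self hx) (hfy.trans hfx.symm)⟩

theorem strictMono_mul_sinh_sub_mul_sinh {m₁ m₂ : ℝ} (hm₁ : 0 < m₁) (hm₂ : 0 < m₂) (ψ : ℝ) :
    StrictMono fun x => m₁ * sinh (2 * x) - m₂ * sinh (2 * (ψ - x)) := by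
  intro a b hab
  dsimp only
  gcongr <;> exact sinh_strictMono (by linarith)

/-- for all masses `m₁, m₂ > 0` and all `ψ > 0` there exists a unique pair
of positive reals `(χ₁, χ₂)` with `χ₁ + χ₂ = ψ` and `m₁ sinh 2χ₁ = m₂ sinh 2χ₂`. -/
theorem existsUnique_chi_pair (m₁ m₂ ψ : ℝ) (hm₁ : 0 < m₁) (hm₂ : 0 < m₂) (hψ : 0 < ψ) :
    ∃! χ : ℝ × ℝ, 0 < χ.1 ∧ 0 < χ.2 ∧ χ.1 + χ.2 = ψ
      ∧ m₁ * Real.sinh (2 * χ.1) = m₂ * Real.sinh (2 * χ.2) := by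
  set balance := fun x => m₁ * sinh (2 * x) - m₂ * sinh (2 * (ψ - x))
  obtain ⟨x, ⟨hx, hx_zero⟩, hx_unique⟩ := existsUnique_mem_Ioo_eq_of_strictMonoOn hψ.le
    ((strictMono_mul_sinh_sub_mul_sinh hm₁ hm₂ ψ).strictMonoOn _) (by fun_prop)
    (show balance 0 < 0 by simp [balance]; positivity)
    (show 0 < balance ψ by simp [balance]; positivity)
  refine ⟨(x, ψ - x), ⟨hx.1, sub_pos.2 hx.2, add_sub_cancel _ _, sub_eq_zero.1 hx_zero⟩, ?_⟩
  rintro ⟨a, b⟩ ⟨ha, hb, rfl, hab⟩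
  obtain rfl : a = x := hx_unique a ⟨⟨ha, by simpa using hb⟩, by simp [hab]⟩
  simp
end

section
/- Let m₁, m₂ > 0 and ψ > 0, and let (χ₁, χ₂) be the unique pair of positive reals with χ₁ + χ₂ = ψ and m₁ sinh(2χ₁) = m₂ sinh(2χ₂). Set Z = sqrt((m₁ + m₂ e^{2ψ})(m₂ + m₁ e^{2ψ})) and ζ = m₁ sinh(2χ₁). Then sinh(2χ₁) = m₂ e^{ψ} sinh(2ψ)/Z, cosh(2χ₁) = e^{ψ}(m₁ + m₂ cosh(2ψ))/Z, and ζ = m₁ m₂ Z^{-1} e^{ψ} sinh(2ψ). -/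
/-! Writing `s = sinh 2χ₁`, `c = cosh 2χ₁`, the balance condition becomes the linear relation
`(m₁ + m₂ cosh 2ψ) s = (m₂ sinh 2ψ) c`. Together with `c² - s² = 1` and `c > 0` it pins down `(s, c)` as
`(m₂ sinh 2ψ, m₁ + m₂ cosh 2ψ) / √((m₁ + m₂ cosh 2ψ)² - (m₂ sinh 2ψ)²)`, and that square root
is `e^{-ψ} Z`. -/

open Real

namespace Real

theorem add_mul_cosh_mul_sinh_eq_of_mul_sinh_eq_mul_sinh_sub {m₁ m₂ x y : ℝ}
    (h : m₁ * sinh x = m₂ * sinh (y - x)) :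
    (m₁ + m₂ * cosh y) * sinh x = m₂ * sinh y * cosh x := by
  rw [sinh_sub] at h
  linear_combination h

theorem sqrt_sq_sub_sq_eq_div_cosh_of_mul_sinh_eq_mul_cosh {A B x : ℝ} (hA : 0 < A)
    (h : A * sinh x = B * cosh x) : √(A ^ 2 - B ^ 2) = A / cosh x := by
  have hc : 0 < cosh x := cosh_pos x
  have hB : B = A * sinh x / cosh x := by field_simp; linarith
  have hAB : A ^ 2 - B ^ 2 = (A / cosh x) ^ 2 := by
    rw [hB]
    field_simp
    linear_combination cosh_sq x
  rw [hAB, sqrt_sq (by positivity)]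

theorem add_mul_exp_mul_add_mul_exp (m₁ m₂ t : ℝ) :
    (m₁ + m₂ * exp t) * (m₂ + m₁ * exp t)
      = exp t * ((m₁ + m₂ * cosh t) ^ 2 - (m₂ * sinh t) ^ 2) := by
  rw [cosh_eq, sinh_eq, exp_neg]
  field_simp
  ring

end Real

theorem chi_formulas_general (m₁ m₂ ψ χ₁ χ₂ : ℝ) (hm₁ : 0 < m₁) (hm₂ : 0 < m₂)
    (hsum : χ₁ + χ₂ = ψ)
    (hbal : m₁ * Real.sinh (2 * χ₁) = m₂ * Real.sinh (2 * χ₂)) :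
    let Z := Real.sqrt ((m₁ + m₂ * Real.exp (2 * ψ)) * (m₂ + m₁ * Real.exp (2 * ψ)))
    let ζ := m₁ * Real.sinh (2 * χ₁)
    Real.sinh (2 * χ₁) = m₂ * Real.exp ψ * Real.sinh (2 * ψ) / Z
    ∧ Real.cosh (2 * χ₁) = Real.exp ψ * (m₁ + m₂ * Real.cosh (2 * ψ)) / Z
    ∧ ζ = m₁ * m₂ * Z⁻¹ * Real.exp ψ * Real.sinh (2 * ψ) := by
  intro Z ζ
  have hA : 0 < m₁ + m₂ * cosh (2 * ψ) := by positivity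
  have hc : 0 < cosh (2 * χ₁) := cosh_pos _
  have key := add_mul_cosh_mul_sinh_eq_of_mul_sinh_eq_mul_sinh_sub
    (x := 2 * χ₁) (y := 2 * ψ) (by rw [hbal, ← hsum]; ring_nf)
  have hZ : Z = exp ψ * ((m₁ + m₂ * cosh (2 * ψ)) / cosh (2 * χ₁)) := by
    rw [← sqrt_sq_sub_sq_eq_div_cosh_of_mul_sinh_eq_mul_cosh (B := m₂ * sinh (2 * ψ)) hA key,
      ← sqrt_sq (exp_pos ψ).le, ← sqrt_mul (by positivity), ← exp_nat_mul]
    push_cast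
    exact congrArg sqrt (add_mul_exp_mul_add_mul_exp m₁ m₂ (2 * ψ))
  refine ⟨?_, ?_, ?_⟩ <;> rw [hZ] <;> field_simp
  · linear_combination key
  · linear_combination m₁ * key

/-- with `(χ₁, χ₂)` the unique pair of positive reals satisfying
`χ₁ + χ₂ = ψ` and `m₁ sinh 2χ₁ = m₂ sinh 2χ₂`, and with
`Z = sqrt((m₁ + m₂e^{2ψ})(m₂ + m₁e^{2ψ}))` and `ζ = m₁ sinh 2χ₁`, one has
`sinh 2χ₁ = m₂ e^ψ sinh 2ψ / Z`, `cosh 2χ₁ = e^ψ (m₁ + m₂ cosh 2ψ)/Z` and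
`ζ = m₁ m₂ Z⁻¹ e^ψ sinh 2ψ`. -/
theorem chi_formulas (m₁ m₂ ψ χ₁ χ₂ : ℝ) (hm₁ : 0 < m₁) (hm₂ : 0 < m₂) (hψ : 0 < ψ)
    (hχ₁ : 0 < χ₁) (hχ₂ : 0 < χ₂) (hsum : χ₁ + χ₂ = ψ)
    (hbal : m₁ * Real.sinh (2 * χ₁) = m₂ * Real.sinh (2 * χ₂)) :
    let Z := Real.sqrt ((m₁ + m₂ * Real.exp (2 * ψ)) * (m₂ + m₁ * Real.exp (2 * ψ)))
    let ζ := m₁ * Real.sinh (2 * χ₁)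
    Real.sinh (2 * χ₁) = m₂ * Real.exp ψ * Real.sinh (2 * ψ) / Z
    ∧ Real.cosh (2 * χ₁) = Real.exp ψ * (m₁ + m₂ * Real.cosh (2 * ψ)) / Z
    ∧ ζ = m₁ * m₂ * Z⁻¹ * Real.exp ψ * Real.sinh (2 * ψ) :=
  chi_formulas_general m₁ m₂ ψ χ₁ χ₂ hm₁ hm₂ hsum hbal
end

section
/- Let m > 0, χ ∈ ℝ, and η ∈ ℂ. Set S = diag(η, -η) and q = cosh(χ)·1 + sinh(χ)·j. Then the matrix L = -m (S q + q S†) q⁻¹ equals -m(η + η̄ cosh(2χ))·σ₃ + m η̄ sinh(2χ)·J; equivalently, writing L = x I + y J with respect to the biquaternion basis, x = i m (η + η̄ cosh 2χ) and y = m η̄ sinh 2χ. -/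
/-! `q = !![cosh χ, sinh χ; sinh χ, cosh χ]` has determinant `cosh² χ - sinh² χ = 1`, so its inverse
is `!![cosh χ, -sinh χ; -sinh χ, cosh χ]`. Multiplying out `(S q + q S†) q⁻¹` produces
`cosh² χ ± sinh² χ` and `2 sinh χ cosh χ`, i.e. `1`, `cosh 2χ` and `sinh 2χ`; the second form
follows from `I = i σ₃`. -/

open Matrix

section Boost

variable {R : Type*} [CommRing R]

theorem smul_one_add_smul_swap_fin_two (a b : R) :
    a • (1 : Matrix (Fin 2) (Fin 2) R) + b • !![0, 1; 1, 0] = !![a, b; b, a] := by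
  ext i j
  fin_cases i <;> fin_cases j <;> simp

theorem inv_fin_two_symm_of_sq_sub_sq_eq_one {a b : R} (h : a ^ 2 - b ^ 2 = 1) :
    (!![a, b; b, a])⁻¹ = !![a, -b; -b, a] := by
  refine inv_eq_right_inv ?_
  ext i j
  fin_cases i <;> fin_cases j <;> simp [mul_apply, Fin.sum_univ_two]
  all_goals first | ring1 | linear_combination h

theorem diag_mul_add_mul_diag_mul_fin_two (η ζ a b : R) :
    (!![η, 0; 0, -η] * !![a, b; b, a] + !![a, b; b, a] * !![ζ, 0; 0, -ζ]) * !![a, -b; -b, a] =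
      (η * (a ^ 2 - b ^ 2) + ζ * (a ^ 2 + b ^ 2)) • !![1, 0; 0, -1]
        - (2 * ζ * a * b) • !![0, 1; -1, 0] := by
  ext i j
  fin_cases i <;> fin_cases j <;> simp [mul_apply, Fin.sum_univ_two] <;> ring

end Boost

theorem conjTranspose_diag_neg_fin_two {R : Type*} [Ring R] [StarRing R] (η : R) :
    (!![η, 0; 0, -η])ᴴ = !![star η, 0; 0, -star η] := by
  ext i j
  fin_cases i <;> fin_cases j <;> simp

theorem left_momentum_of_reconstructed_solution_general (m χ : ℝ) (η : ℂ) :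
    let S : Matrix (Fin 2) (Fin 2) ℂ := !![η, 0; 0, -η]
    let jmat : Matrix (Fin 2) (Fin 2) ℂ := !![0, 1; 1, 0]
    let q : Matrix (Fin 2) (Fin 2) ℂ :=
      (Real.cosh χ : ℂ) • (1 : Matrix (Fin 2) (Fin 2) ℂ) + (Real.sinh χ : ℂ) • jmat
    let σ₃ : Matrix (Fin 2) (Fin 2) ℂ := !![1, 0; 0, -1]
    let Imat : Matrix (Fin 2) (Fin 2) ℂ := !![Complex.I, 0; 0, -Complex.I]
    let Jmat : Matrix (Fin 2) (Fin 2) ℂ := !![0, 1; -1, 0]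
    let L : Matrix (Fin 2) (Fin 2) ℂ := (-(m : ℂ)) • ((S * q + q * Sᴴ) * q⁻¹)
    L = (-((m : ℂ) * (η + (starRingEnd ℂ) η * (Real.cosh (2 * χ) : ℂ)))) • σ₃
        + ((m : ℂ) * (starRingEnd ℂ) η * (Real.sinh (2 * χ) : ℂ)) • Jmat
    ∧ L = (Complex.I * (m : ℂ) * (η + (starRingEnd ℂ) η * (Real.cosh (2 * χ) : ℂ))) • Imat
        + ((m : ℂ) * (starRingEnd ℂ) η * (Real.sinh (2 * χ) : ℂ)) • Jmat := by
  intro S jmat q σ₃ Imat Jmat L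
  set c : ℂ := ((Real.cosh χ : ℝ) : ℂ)
  set s : ℂ := ((Real.sinh χ : ℝ) : ℂ)
  have hcs : c ^ 2 - s ^ 2 = 1 := by
    rw [← Complex.ofReal_pow, ← Complex.ofReal_pow, ← Complex.ofReal_sub, Real.cosh_sq_sub_sinh_sq,
      Complex.ofReal_one]
  have hc2 : (Real.cosh (2 * χ) : ℂ) = c ^ 2 + s ^ 2 := by
    rw [Real.cosh_two_mul, Complex.ofReal_add, Complex.ofReal_pow, Complex.ofReal_pow]
  have hs2 : (Real.sinh (2 * χ) : ℂ) = 2 * s * c := by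
    rw [Real.sinh_two_mul, Complex.ofReal_mul, Complex.ofReal_mul, Complex.ofReal_ofNat]
  have hq : q = !![c, s; s, c] := smul_one_add_smul_swap_fin_two c s
  have hL : L = (-(m : ℂ)) • ((η * (c ^ 2 - s ^ 2) + starRingEnd ℂ η * (c ^ 2 + s ^ 2)) • σ₃
      - (2 * starRingEnd ℂ η * c * s) • Jmat) := by
    rw [← diag_mul_add_mul_diag_mul_fin_two, ← inv_fin_two_symm_of_sq_sub_sq_eq_one hcs, ← hq]
    simp only [L, S, conjTranspose_diag_neg_fin_two, Complex.star_def]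
  have hσ₃ : L = (-((m : ℂ) * (η + (starRingEnd ℂ) η * (Real.cosh (2 * χ) : ℂ)))) • σ₃
        + ((m : ℂ) * (starRingEnd ℂ) η * (Real.sinh (2 * χ) : ℂ)) • Jmat := by
    rw [hL, hcs, hc2, hs2]
    module
  have hI : Imat = Complex.I • σ₃ := by
    ext i j
    fin_cases i <;> fin_cases j <;> simp [Imat, σ₃]
  refine ⟨hσ₃, ?_⟩
  rw [hσ₃, hI, smul_smul]
  congr 2
  linear_combination
    (-(m : ℂ) * (η + (starRingEnd ℂ) η * (Real.cosh (2 * χ) : ℂ))) * Complex.I_mul_I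

/-- for a particle of mass `m` at `q = cosh(χ)·1 + sinh(χ)·j` moving along
the orbit of `exp(St)` with `S = diag(η, -η)`, the left-momentum
`L = -m (S q + q S†) q⁻¹` equals `-m(η + η̄ cosh 2χ)·σ₃ + m η̄ sinh 2χ·J`, equivalently
`L = x I + y J` with `x = i m (η + η̄ cosh 2χ)` and `y = m η̄ sinh 2χ`. -/
theorem left_momentum_of_reconstructed_solution (m χ : ℝ) (hm : 0 < m) (η : ℂ) :
    let S : Matrix (Fin 2) (Fin 2) ℂ := !![η, 0; 0, -η]
    let jmat : Matrix (Fin 2) (Fin 2) ℂ := !![0, 1; 1, 0]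
    let q : Matrix (Fin 2) (Fin 2) ℂ :=
      (Real.cosh χ : ℂ) • (1 : Matrix (Fin 2) (Fin 2) ℂ) + (Real.sinh χ : ℂ) • jmat
    let σ₃ : Matrix (Fin 2) (Fin 2) ℂ := !![1, 0; 0, -1]
    let Imat : Matrix (Fin 2) (Fin 2) ℂ := !![Complex.I, 0; 0, -Complex.I]
    let Jmat : Matrix (Fin 2) (Fin 2) ℂ := !![0, 1; -1, 0]
    let L : Matrix (Fin 2) (Fin 2) ℂ := (-(m : ℂ)) • ((S * q + q * Sᴴ) * q⁻¹)
    L = (-((m : ℂ) * (η + (starRingEnd ℂ) η * (Real.cosh (2 * χ) : ℂ)))) • σ₃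
        + ((m : ℂ) * (starRingEnd ℂ) η * (Real.sinh (2 * χ) : ℂ)) • Jmat
    ∧ L = (Complex.I * (m : ℂ) * (η + (starRingEnd ℂ) η * (Real.cosh (2 * χ) : ℂ))) • Imat
        + ((m : ℂ) * (starRingEnd ℂ) η * (Real.sinh (2 * χ) : ℂ)) • Jmat :=
  left_momentum_of_reconstructed_solution_general m χ η
end

section
/- Let q₁, q₂ ∈ M₂(ℂ) be positive-definite Hermitian matrices with det q₁ = det q₂ = 1, and suppose q₁ q₂⁻¹ = cosh(ψ)·1 + sinh(ψ)·j for some real ψ ≠ 0. Then there exist real numbers χ₁, χ₂ with χ₁ + χ₂ = ψ such that q₁ = cosh(χ₁)·1 + sinh(χ₁)·j and q₂ = cosh(χ₂)·1 - sinh(χ₂)·j. -/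
/-!
Write `q₁ = e^{ψj} q₂`. Both factors are Hermitian, so Hermiticity of `q₁` says that `e^{ψj}`
commutes with `q₂`; since `sinh ψ ≠ 0`, so does `j`. Hence `q₂ = a + b j` with `a, b` real,
and positivity together with `a² - b² = det q₂ = 1` gives `q₂ = e^{χj}`, so `q₁ = e^{(ψ+χ)j}`.
-/

open Matrix
open scoped ComplexOrder

def splitUnit (R : Type*) [Zero R] [One R] : Matrix (Fin 2) (Fin 2) R := !![0, 1; 1, 0]

noncomputable def splitExp (χ : ℝ) : Matrix (Fin 2) (Fin 2) ℂ :=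
  (Real.cosh χ : ℂ) • (1 : Matrix (Fin 2) (Fin 2) ℂ) + (Real.sinh χ : ℂ) • splitUnit ℂ

theorem Real.exists_cosh_sinh_eq {a b : ℝ} (ha : 0 < a) (hab : a ^ 2 - b ^ 2 = 1) :
    ∃ χ, Real.cosh χ = a ∧ Real.sinh χ = b := by
  refine ⟨Real.arsinh b, ?_, Real.sinh_arsinh b⟩
  rw [Real.cosh_arsinh, show 1 + b ^ 2 = a ^ 2 by linarith, Real.sqrt_sq ha.le]

theorem isHermitian_splitUnit {R : Type*} [Semiring R] [StarRing R] :
    (splitUnit R).IsHermitian := by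
  ext i j; fin_cases i <;> fin_cases j <;> simp [splitUnit]

theorem isHermitian_splitExp (χ : ℝ) : (splitExp χ).IsHermitian :=
  (isHermitian_one.smul (Complex.conj_ofReal _)).add
    (isHermitian_splitUnit.smul (Complex.conj_ofReal _))

theorem splitExp_add (χ₁ χ₂ : ℝ) : splitExp (χ₁ + χ₂) = splitExp χ₁ * splitExp χ₂ := by
  ext i j
  fin_cases i <;> fin_cases j <;>
    simp [splitExp, splitUnit, mul_apply, Fin.sum_univ_two, Real.cosh_add, Real.sinh_add] <;> ring

theorem splitExp_neg (χ : ℝ) :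
    splitExp (-χ) = (Real.cosh χ : ℂ) • (1 : Matrix (Fin 2) (Fin 2) ℂ)
      - (Real.sinh χ : ℂ) • splitUnit ℂ := by
  simp [splitExp, sub_eq_add_neg]

theorem commute_splitUnit_iff {R : Type*} [CommRing R] {q : Matrix (Fin 2) (Fin 2) R} :
    Commute (splitUnit R) q ↔ q 1 1 = q 0 0 ∧ q 0 1 = q 1 0 := by
  refine ⟨fun h ↦ ⟨?_, ?_⟩, fun ⟨h11, h01⟩ ↦ ?_⟩
  · simpa [splitUnit, mul_apply, Fin.sum_univ_two] using congrFun₂ h.eq 0 1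
  · simpa [splitUnit, mul_apply, Fin.sum_univ_two] using (congrFun₂ h.eq 0 0).symm
  · ext i j
    fin_cases i <;> fin_cases j <;> simp [splitUnit, mul_apply, Fin.sum_univ_two, h11, h01]

theorem commute_splitUnit_of_isHermitian_splitExp_mul {ψ : ℝ} (hψ : ψ ≠ 0)
    {q : Matrix (Fin 2) (Fin 2) ℂ} (hq : q.IsHermitian) (hψq : (splitExp ψ * q).IsHermitian) :
    Commute (splitUnit ℂ) q := by
  have hcomm : Commute (splitExp ψ) q := ((isHermitian_splitExp ψ).commute_iff hq).mpr hψq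
  have hsinh : (Real.sinh ψ : ℂ) ≠ 0 := by exact_mod_cast Real.sinh_ne_zero.mpr hψ
  rw [← Commute.smul_left_iff₀ hsinh]
  simpa [splitExp] using hcomm.sub_left ((Commute.one_left q).smul_left (Real.cosh ψ : ℂ))

theorem exists_eq_splitExp_of_posDef_of_commute {q : Matrix (Fin 2) (Fin 2) ℂ} (hq : q.PosDef)
    (hdet : q.det = 1) (hJ : Commute (splitUnit ℂ) q) : ∃ χ, q = splitExp χ := by
  obtain ⟨h11, h01⟩ := commute_splitUnit_iff.mp hJ
  have ha : ((q 0 0).re : ℂ) = q 0 0 := Complex.conj_eq_iff_re.mp (hq.1.apply 0 0)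
  have hb : ((q 1 0).re : ℂ) = q 1 0 := by
    have hconj := hq.1.apply 1 0
    rw [h01] at hconj
    exact Complex.conj_eq_iff_re.mp hconj
  have ha_pos : 0 < (q 0 0).re := (Complex.pos_iff.mp hq.diag_pos).1
  have hab : (q 0 0).re ^ 2 - (q 1 0).re ^ 2 = 1 := by
    rw [det_fin_two, h11, h01, ← ha, ← hb] at hdet
    exact_mod_cast (by push_cast; linear_combination hdet :
      (((q 0 0).re ^ 2 - (q 1 0).re ^ 2 : ℝ) : ℂ) = (1 : ℝ))
  obtain ⟨χ, hcosh, hsinh⟩ := Real.exists_cosh_sinh_eq ha_pos hab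
  refine ⟨χ, ?_⟩
  ext i j
  fin_cases i <;> fin_cases j <;> simp [splitExp, splitUnit, hcosh, hsinh, ha, hb, h11, h01]

theorem reconstruction_on_geodesic_general (q₁ q₂ : Matrix (Fin 2) (Fin 2) ℂ)
    (h₁pd : q₁.PosDef) (h₂pd : q₂.PosDef)
    (h₂det : q₂.det = 1)
    (ψ : ℝ) (hψ : ψ ≠ 0)
    (hrel : q₁ * q₂⁻¹ = (Real.cosh ψ : ℂ) • (1 : Matrix (Fin 2) (Fin 2) ℂ)
        + (Real.sinh ψ : ℂ) • !![0, 1; 1, 0]) :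
    ∃ χ₁ χ₂ : ℝ, χ₁ + χ₂ = ψ
      ∧ q₁ = (Real.cosh χ₁ : ℂ) • (1 : Matrix (Fin 2) (Fin 2) ℂ)
          + (Real.sinh χ₁ : ℂ) • !![0, 1; 1, 0]
      ∧ q₂ = (Real.cosh χ₂ : ℂ) • (1 : Matrix (Fin 2) (Fin 2) ℂ)
          - (Real.sinh χ₂ : ℂ) • !![0, 1; 1, 0] := by
  have hq₁ : q₁ = splitExp ψ * q₂ := by
    rw [← nonsing_inv_mul_cancel_right q₁ (A := q₂) (h₂det ▸ isUnit_one), hrel]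
    rfl
  have hJ : Commute (splitUnit ℂ) q₂ :=
    commute_splitUnit_of_isHermitian_splitExp_mul hψ h₂pd.1 (hq₁ ▸ h₁pd.1)
  obtain ⟨χ, rfl⟩ := exists_eq_splitExp_of_posDef_of_commute h₂pd h₂det hJ
  have hq₂ := splitExp_neg (-χ)
  rw [neg_neg] at hq₂
  exact ⟨ψ + χ, -χ, by ring, hq₁.trans (splitExp_add ψ χ).symm, hq₂⟩

/-- if `q₁, q₂` are positive-definite Hermitian matrices of determinant `1`
with `q₁ q₂⁻¹ = cosh(ψ)·1 + sinh(ψ)·j` for some real `ψ ≠ 0`, then there exist reals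
`χ₁, χ₂` with `χ₁ + χ₂ = ψ`, `q₁ = cosh(χ₁)·1 + sinh(χ₁)·j` and
`q₂ = cosh(χ₂)·1 - sinh(χ₂)·j`. -/
theorem reconstruction_on_geodesic (q₁ q₂ : Matrix (Fin 2) (Fin 2) ℂ)
    (h₁pd : q₁.PosDef) (h₂pd : q₂.PosDef)
    (h₁det : q₁.det = 1) (h₂det : q₂.det = 1)
    (ψ : ℝ) (hψ : ψ ≠ 0)
    (hrel : q₁ * q₂⁻¹ = (Real.cosh ψ : ℂ) • (1 : Matrix (Fin 2) (Fin 2) ℂ)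
        + (Real.sinh ψ : ℂ) • !![0, 1; 1, 0]) :
    ∃ χ₁ χ₂ : ℝ, χ₁ + χ₂ = ψ
      ∧ q₁ = (Real.cosh χ₁ : ℂ) • (1 : Matrix (Fin 2) (Fin 2) ℂ)
          + (Real.sinh χ₁ : ℂ) • !![0, 1; 1, 0]
      ∧ q₂ = (Real.cosh χ₂ : ℂ) • (1 : Matrix (Fin 2) (Fin 2) ℂ)
          - (Real.sinh χ₂ : ℂ) • !![0, 1; 1, 0] :=
  reconstruction_on_geodesic_general q₁ q₂ h₁pd h₂pd h₂det ψ hψ hrel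
end

section
/- Let m₁, m₂ > 0, let χ₁, χ₂ > 0, set ψ = χ₁ + χ₂, let f > 0 be real, and let η ∈ ℂ be nonzero. Define y = f sinh(ψ)/(2η), x₁ = i y (coth(2ψ) + (m₁/m₂) csch(2ψ)) + i m₁ η, and x₂ = i y (coth(2ψ) + (m₂/m₁) csch(2ψ)) + i m₂ η. Then the four equations x₁ = i m₁(η + η̄ cosh 2χ₁), x₂ = i m₂(η + η̄ cosh 2χ₂), y = m₁ η̄ sinh(2χ₁), and y = m₂ η̄ sinh(2χ₂) hold simultaneously if and only if m₁ sinh(2χ₁) = m₂ sinh(2χ₂) and |η|² = f sinh(ψ)/(2ζ), where ζ = m₁ sinh(2χ₁). -/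
/-!
The last two equations say `y = ζ η̄` with `ζ = m₁ sinh 2χ₁ = m₂ sinh 2χ₂`, and since
`y = f sinh ψ / (2η)` this fixes `|η|²`. Given that, the first two equations are automatic: they
reduce to `sinh 2χ₁ (coth 2ψ + (m₁/m₂) csch 2ψ) = cosh 2χ₁` (and its mirror image), which is
`sinh (2ψ - 2χ₁) = sinh 2χ₂ = (m₁/m₂) sinh 2χ₁`.
-/

open Complex ComplexConjugate

lemma Real.sinh_mul_coth_add_mul_csch {u v r : ℝ} (hr : r * Real.sinh u = Real.sinh v)
    (h : Real.sinh (u + v) ≠ 0) :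
    Real.sinh u * (Real.cosh (u + v) / Real.sinh (u + v) + r * (1 / Real.sinh (u + v)))
      = Real.cosh u := by
  have hsub : Real.sinh (u + v) * Real.cosh u - Real.cosh (u + v) * Real.sinh u
      = Real.sinh v := by
    simpa using (Real.sinh_sub (u + v) u).symm
  rw [mul_one_div, ← add_div, mul_div_assoc', div_eq_iff h]
  linear_combination hr - hsub

lemma Complex.ofReal_div_two_mul_eq_mul_conj_iff {η : ℂ} {ζ : ℝ} (hη : η ≠ 0) (hζ : ζ ≠ 0)
    (c : ℝ) : (c : ℂ) / (2 * η) = ζ * conj η ↔ normSq η = c / (2 * ζ) := by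
  rw [div_eq_iff (mul_ne_zero two_ne_zero hη), eq_div_iff (mul_ne_zero two_ne_zero hζ),
    ← ofReal_inj]
  push_cast
  rw [← mul_conj]
  constructor <;> intro h <;> linear_combination -h

lemma I_mul_add_I_mul_eq_of_eq_mul_conj {m s c : ℝ} {η y K : ℂ} (hy : y = m * conj η * s)
    (hK : (s : ℂ) * K = c) :
    I * y * K + I * m * η = I * m * (η + conj η * c) := by
  rw [hy, ← hK]
  ring

theorem matching_conditions_classify_relative_equilibria_general
    (m₁ m₂ χ₁ χ₂ f : ℝ) (hm₁ : 0 < m₁) (hm₂ : 0 < m₂)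
    (hχ₁ : 0 < χ₁) (hχ₂ : 0 < χ₂) (η : ℂ) (hη : η ≠ 0) :
    let ψ : ℝ := χ₁ + χ₂
    let y : ℂ := (f : ℂ) * (Real.sinh ψ : ℂ) / (2 * η)
    let x₁ : ℂ := Complex.I * y * ((Real.cosh (2 * ψ) / Real.sinh (2 * ψ) : ℝ)
        + (m₁ / m₂ : ℝ) * (1 / Real.sinh (2 * ψ) : ℝ)) + Complex.I * (m₁ : ℂ) * η
    let x₂ : ℂ := Complex.I * y * ((Real.cosh (2 * ψ) / Real.sinh (2 * ψ) : ℝ)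
        + (m₂ / m₁ : ℝ) * (1 / Real.sinh (2 * ψ) : ℝ)) + Complex.I * (m₂ : ℂ) * η
    ((x₁ = Complex.I * (m₁ : ℂ) * (η + (starRingEnd ℂ) η * (Real.cosh (2 * χ₁) : ℂ))
        ∧ x₂ = Complex.I * (m₂ : ℂ) * (η + (starRingEnd ℂ) η * (Real.cosh (2 * χ₂) : ℂ))
        ∧ y = (m₁ : ℂ) * (starRingEnd ℂ) η * (Real.sinh (2 * χ₁) : ℂ)
        ∧ y = (m₂ : ℂ) * (starRingEnd ℂ) η * (Real.sinh (2 * χ₂) : ℂ))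
      ↔ (m₁ * Real.sinh (2 * χ₁) = m₂ * Real.sinh (2 * χ₂)
        ∧ Complex.normSq η = f * Real.sinh ψ / (2 * (m₁ * Real.sinh (2 * χ₁))))) := by
  intro ψ y x₁ x₂
  have hζ : 0 < m₁ * Real.sinh (2 * χ₁) := mul_pos hm₁ (Real.sinh_pos_iff.mpr (by positivity))
  have hsψ : Real.sinh (2 * ψ) ≠ 0 := (Real.sinh_pos_iff.mpr (by positivity)).ne'
  have hψ₁ : 2 * ψ = 2 * χ₁ + 2 * χ₂ := mul_add 2 χ₁ χ₂
  have hψ₂ : 2 * ψ = 2 * χ₂ + 2 * χ₁ := by rw [hψ₁, add_comm]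
  have hy₁ : y = m₁ * conj η * Real.sinh (2 * χ₁) ↔
      normSq η = f * Real.sinh ψ / (2 * (m₁ * Real.sinh (2 * χ₁))) := by
    rw [← ofReal_div_two_mul_eq_mul_conj_iff hη hζ.ne', ofReal_mul, ofReal_mul,
      mul_right_comm (m₁ : ℂ)]
  have hy₂ (h : y = m₁ * conj η * Real.sinh (2 * χ₁)) :
      y = m₂ * conj η * Real.sinh (2 * χ₂) ↔
        m₁ * Real.sinh (2 * χ₁) = m₂ * Real.sinh (2 * χ₂) := by
    rw [h, ← ofReal_inj, mul_right_comm, mul_right_comm (m₂ : ℂ)]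
    push_cast
    exact mul_left_inj' ((map_ne_zero _).mpr hη)
  have hx₁ (hm : m₁ * Real.sinh (2 * χ₁) = m₂ * Real.sinh (2 * χ₂))
      (h : y = m₁ * conj η * Real.sinh (2 * χ₁)) :
      x₁ = I * m₁ * (η + conj η * Real.cosh (2 * χ₁)) := by
    refine I_mul_add_I_mul_eq_of_eq_mul_conj h ?_
    rw [hψ₁] at hsψ ⊢
    exact_mod_cast Real.sinh_mul_coth_add_mul_csch
      (by rw [div_mul_eq_mul_div, hm]; field_simp) hsψ
  have hx₂ (hm : m₁ * Real.sinh (2 * χ₁) = m₂ * Real.sinh (2 * χ₂))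
      (h : y = m₂ * conj η * Real.sinh (2 * χ₂)) :
      x₂ = I * m₂ * (η + conj η * Real.cosh (2 * χ₂)) := by
    refine I_mul_add_I_mul_eq_of_eq_mul_conj h ?_
    rw [hψ₂] at hsψ ⊢
    exact_mod_cast Real.sinh_mul_coth_add_mul_csch
      (by rw [div_mul_eq_mul_div, ← hm]; field_simp) hsψ
  constructor
  · rintro ⟨-, -, h₁, h₂⟩
    exact ⟨(hy₂ h₁).mp h₂, hy₁.mp h₁⟩
  · rintro ⟨hm, hnorm⟩
    have h₁ := hy₁.mpr hnorm
    have h₂ := (hy₂ h₁).mpr hm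
    exact ⟨hx₁ hm h₁, hx₂ hm h₂, h₁, h₂⟩

/-- the matching conditions classifying semisimple relative equilibria.
With `ψ = χ₁ + χ₂`, `y = f sinh ψ/(2η)`, `x₁ = i y (coth 2ψ + (m₁/m₂) csch 2ψ) + i m₁ η`
and `x₂ = i y (coth 2ψ + (m₂/m₁) csch 2ψ) + i m₂ η`, the four equations
`x₁ = i m₁(η + η̄ cosh 2χ₁)`, `x₂ = i m₂(η + η̄ cosh 2χ₂)`, `y = m₁ η̄ sinh 2χ₁`,
`y = m₂ η̄ sinh 2χ₂` hold simultaneously iff `m₁ sinh 2χ₁ = m₂ sinh 2χ₂` and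
`|η|² = f sinh ψ/(2ζ)` where `ζ = m₁ sinh 2χ₁`. -/
theorem matching_conditions_classify_relative_equilibria
    (m₁ m₂ χ₁ χ₂ f : ℝ) (hm₁ : 0 < m₁) (hm₂ : 0 < m₂)
    (hχ₁ : 0 < χ₁) (hχ₂ : 0 < χ₂) (hf : 0 < f) (η : ℂ) (hη : η ≠ 0) :
    let ψ : ℝ := χ₁ + χ₂
    let y : ℂ := (f : ℂ) * (Real.sinh ψ : ℂ) / (2 * η)
    let x₁ : ℂ := Complex.I * y * ((Real.cosh (2 * ψ) / Real.sinh (2 * ψ) : ℝ)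
        + (m₁ / m₂ : ℝ) * (1 / Real.sinh (2 * ψ) : ℝ)) + Complex.I * (m₁ : ℂ) * η
    let x₂ : ℂ := Complex.I * y * ((Real.cosh (2 * ψ) / Real.sinh (2 * ψ) : ℝ)
        + (m₂ / m₁ : ℝ) * (1 / Real.sinh (2 * ψ) : ℝ)) + Complex.I * (m₂ : ℂ) * η
    ((x₁ = Complex.I * (m₁ : ℂ) * (η + (starRingEnd ℂ) η * (Real.cosh (2 * χ₁) : ℂ))
        ∧ x₂ = Complex.I * (m₂ : ℂ) * (η + (starRingEnd ℂ) η * (Real.cosh (2 * χ₂) : ℂ))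
        ∧ y = (m₁ : ℂ) * (starRingEnd ℂ) η * (Real.sinh (2 * χ₁) : ℂ)
        ∧ y = (m₂ : ℂ) * (starRingEnd ℂ) η * (Real.sinh (2 * χ₂) : ℂ))
      ↔ (m₁ * Real.sinh (2 * χ₁) = m₂ * Real.sinh (2 * χ₂)
        ∧ Complex.normSq η = f * Real.sinh ψ / (2 * (m₁ * Real.sinh (2 * χ₁))))) :=
  matching_conditions_classify_relative_equilibria_general m₁ m₂ χ₁ χ₂ f hm₁ hm₂ hχ₁ hχ₂ η hη
end

section
/- Let m > 0, χ ∈ ℝ, and let η ∈ ℂ be nonzero with θ = arg η. Then det(-m(η + η̄ cosh 2χ)·σ₃ + m η̄ sinh(2χ)·J) = -2 |η|² m² (cos 2θ + cosh 2χ). Consequently, for m₁, m₂ > 0 and ψ > 0, with χ₁ determined by χ₁ + χ₂ = ψ and m₁ sinh 2χ₁ = m₂ sinh 2χ₂, χ₁, χ₂ > 0, and with |η|² = Z e^{-ψ}/(2 sinh²ψ sinh 2ψ), the invariant k₁₁ = det L₁ equals -(m₁²/(2 sinh³ψ cosh ψ)) (Z e^{-ψ} cos 2θ + m₁ + m₂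 cosh 2ψ), where Z = sqrt((m₁ + m₂ e^{2ψ})(m₂ + m₁ e^{2ψ})). -/
/-!
Writing `L = a σ₃ + b J` gives `det L = b² - a²`. With `a = -m(η + η̄ cosh 2χ)` and
`b = m η̄ sinh 2χ`, the identity `cosh² - sinh² = 1` collapses this to
`-m² (η² + η̄² + 2|η|² cosh 2χ)`, and `η² + η̄² = 2 Re η² = 2|η|² cos 2θ`.

For the relative equilibrium, put `A = m₁ + m₂ cosh 2ψ`, `B = m₂ sinh 2ψ`. Expanding the
exponentials gives `(Z e^{-ψ})² = A² - B²`, while the balance condition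
`m₁ sinh 2χ₁ = m₂ sinh (2ψ - 2χ₁)` says `A sinh 2χ₁ = B cosh 2χ₁`. Together these force
`Z e^{-ψ} cosh 2χ₁ = A`, which turns the first formula into the second.
-/

open Matrix

namespace Complex

theorem re_sq_eq_normSq_mul_cos_two_arg (η : ℂ) :
    (η ^ 2).re = normSq η * Real.cos (2 * arg η) := by
  conv_lhs => rw [← norm_mul_exp_arg_mul_I η]
  rw [mul_pow, ← exp_nat_mul, ← ofReal_pow, Complex.sq_norm]
  push_cast
  rw [re_ofReal_mul, show (2 : ℂ) * (arg η * I) = ((2 * arg η : ℝ) : ℂ) * I by push_cast; ring,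
    exp_ofReal_mul_I_re]

theorem sq_add_conj_sq (η : ℂ) :
    η ^ 2 + starRingEnd ℂ η ^ 2 = ((2 * normSq η * Real.cos (2 * arg η) : ℝ) : ℂ) := by
  rw [← map_pow, add_conj, re_sq_eq_normSq_mul_cos_two_arg, mul_assoc]

end Complex

theorem Matrix.det_smul_sigma3_add_smul_J {R : Type*} [CommRing R] (a b : R) :
    (a • !![1, 0; 0, -1] + b • !![0, 1; -1, 0] : Matrix (Fin 2) (Fin 2) R).det = b ^ 2 - a ^ 2 := by
  have hentries : (a • !![1, 0; 0, -1] + b • !![0, 1; -1, 0] : Matrix (Fin 2) (Fin 2) R)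
      = !![a, b; -b, -a] := by
    ext i j; fin_cases i <;> fin_cases j <;> simp
  rw [hentries, det_fin_two_of]
  ring

theorem det_left_momentum (m χ : ℝ) (η : ℂ) :
    ((-((m : ℂ) * (η + (starRingEnd ℂ) η * (Real.cosh (2 * χ) : ℂ))))
          • (!![1, 0; 0, -1] : Matrix (Fin 2) (Fin 2) ℂ)
        + ((m : ℂ) * (starRingEnd ℂ) η * (Real.sinh (2 * χ) : ℂ))
          • (!![0, 1; -1, 0] : Matrix (Fin 2) (Fin 2) ℂ)).det
      = ((-2 * Complex.normSq η * m ^ 2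
          * (Real.cos (2 * Complex.arg η) + Real.cosh (2 * χ)) : ℝ) : ℂ) := by
  have hcosh : ((Real.cosh (2 * χ) : ℝ) : ℂ) ^ 2 - ((Real.sinh (2 * χ) : ℝ) : ℂ) ^ 2 = 1 := by
    exact_mod_cast Real.cosh_sq_sub_sinh_sq (2 * χ)
  have hnorm : η * starRingEnd ℂ η = (Complex.normSq η : ℂ) := Complex.mul_conj η
  have hsq := Complex.sq_add_conj_sq η
  rw [det_smul_sigma3_add_smul_J]
  push_cast at hcosh hsq ⊢
  linear_combination (-(m : ℂ) ^ 2 * starRingEnd ℂ η ^ 2) * hcosh - (m : ℂ) ^ 2 * hsq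
    - 2 * (m : ℂ) ^ 2 * Complex.cosh (2 * χ) * hnorm

theorem Real.mul_cosh_eq_of_mul_sinh_eq {Z A B x : ℝ} (hZ : 0 ≤ Z) (hA : 0 ≤ A)
    (hZsq : Z ^ 2 = A ^ 2 - B ^ 2) (hAB : A * sinh x = B * cosh x) : Z * cosh x = A := by
  have hsq : (Z * cosh x) ^ 2 = A ^ 2 := by
    linear_combination (cosh x ^ 2) * hZsq + (A * sinh x + B * cosh x) * hAB
      + A ^ 2 * cosh_sq_sub_sinh_sq x
  exact (pow_left_inj₀ (mul_nonneg hZ (cosh_pos x).le) hA two_ne_zero).mp hsq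

theorem sq_sqrt_mul_exp_neg (m₁ m₂ ψ : ℝ) (h₁ : 0 ≤ m₁) (h₂ : 0 ≤ m₂) :
    (Real.sqrt ((m₁ + m₂ * Real.exp (2 * ψ)) * (m₂ + m₁ * Real.exp (2 * ψ)))
        * Real.exp (-ψ)) ^ 2
      = (m₁ + m₂ * Real.cosh (2 * ψ)) ^ 2 - (m₂ * Real.sinh (2 * ψ)) ^ 2 := by
  have he : Real.exp (2 * ψ) * Real.exp (-(2 * ψ)) = 1 := by rw [← Real.exp_add]; simp
  have he' : Real.exp (-ψ) ^ 2 = Real.exp (-(2 * ψ)) := by rw [← Real.exp_nat_mul]; ring_nf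
  rw [mul_pow, Real.sq_sqrt (by positivity), he', Real.cosh_eq, Real.sinh_eq]
  linear_combination (m₁ ^ 2 + m₁ * m₂ * Real.exp (2 * ψ)) * he

theorem mul_sinh_eq_of_balance (m₁ m₂ ψ χ₁ χ₂ : ℝ) (hsum : χ₁ + χ₂ = ψ)
    (hbal : m₁ * Real.sinh (2 * χ₁) = m₂ * Real.sinh (2 * χ₂)) :
    (m₁ + m₂ * Real.cosh (2 * ψ)) * Real.sinh (2 * χ₁)
      = m₂ * Real.sinh (2 * ψ) * Real.cosh (2 * χ₁) := by
  rw [show 2 * χ₂ = 2 * ψ - 2 * χ₁ by rw [← hsum]; ring, Real.sinh_sub] at hbal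
  linear_combination hbal

theorem sqrt_mul_exp_neg_mul_cosh (m₁ m₂ ψ χ₁ χ₂ : ℝ) (h₁ : 0 ≤ m₁) (h₂ : 0 ≤ m₂)
    (hsum : χ₁ + χ₂ = ψ) (hbal : m₁ * Real.sinh (2 * χ₁) = m₂ * Real.sinh (2 * χ₂)) :
    Real.sqrt ((m₁ + m₂ * Real.exp (2 * ψ)) * (m₂ + m₁ * Real.exp (2 * ψ)))
        * Real.exp (-ψ) * Real.cosh (2 * χ₁)
      = m₁ + m₂ * Real.cosh (2 * ψ) :=
  Real.mul_cosh_eq_of_mul_sinh_eq (by positivity) (by positivity)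
    (sq_sqrt_mul_exp_neg m₁ m₂ ψ h₁ h₂) (mul_sinh_eq_of_balance m₁ m₂ ψ χ₁ χ₂ hsum hbal)

/-- `det(-m(η + η̄ cosh 2χ)σ₃ + m η̄ sinh(2χ) J) = -2|η|²m²(cos 2θ + cosh 2χ)`
with `θ = arg η`; consequently, for a gravitational relative equilibrium with separation
`ψ` and phase `θ`, the invariant `k₁₁ = det L₁` equals
`-(m₁²/(2 sinh³ψ cosh ψ))(Z e^{-ψ} cos 2θ + m₁ + m₂ cosh 2ψ)`. -/
theorem det_left_momentum_invariant :
    (∀ (m χ : ℝ), 0 < m → ∀ η : ℂ, η ≠ 0 →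
      ((-((m : ℂ) * (η + (starRingEnd ℂ) η * (Real.cosh (2 * χ) : ℂ))))
            • (!![1, 0; 0, -1] : Matrix (Fin 2) (Fin 2) ℂ)
          + ((m : ℂ) * (starRingEnd ℂ) η * (Real.sinh (2 * χ) : ℂ))
            • (!![0, 1; -1, 0] : Matrix (Fin 2) (Fin 2) ℂ)).det
        = ((-2 * Complex.normSq η * m ^ 2
            * (Real.cos (2 * Complex.arg η) + Real.cosh (2 * χ)) : ℝ) : ℂ))
    ∧ (∀ (m₁ m₂ ψ χ₁ χ₂ : ℝ), 0 < m₁ → 0 < m₂ → 0 < ψ → 0 < χ₁ → 0 < χ₂ →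
        χ₁ + χ₂ = ψ → m₁ * Real.sinh (2 * χ₁) = m₂ * Real.sinh (2 * χ₂) →
        ∀ η : ℂ, η ≠ 0 →
        Complex.normSq η
          = Real.sqrt ((m₁ + m₂ * Real.exp (2 * ψ)) * (m₂ + m₁ * Real.exp (2 * ψ)))
              * Real.exp (-ψ) / (2 * Real.sinh ψ ^ 2 * Real.sinh (2 * ψ)) →
        ((-((m₁ : ℂ) * (η + (starRingEnd ℂ) η * (Real.cosh (2 * χ₁) : ℂ))))
              • (!![1, 0; 0, -1] : Matrix (Fin 2) (Fin 2) ℂ)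
            + ((m₁ : ℂ) * (starRingEnd ℂ) η * (Real.sinh (2 * χ₁) : ℂ))
              • (!![0, 1; -1, 0] : Matrix (Fin 2) (Fin 2) ℂ)).det
          = ((-(m₁ ^ 2 / (2 * Real.sinh ψ ^ 3 * Real.cosh ψ))
              * (Real.sqrt ((m₁ + m₂ * Real.exp (2 * ψ)) * (m₂ + m₁ * Real.exp (2 * ψ)))
                    * Real.exp (-ψ) * Real.cos (2 * Complex.arg η)
                  + m₁ + m₂ * Real.cosh (2 * ψ)) : ℝ) : ℂ)) := by
  refine ⟨fun m χ _ η _ => det_left_momentum m χ η, ?_⟩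
  intro m₁ m₂ ψ χ₁ χ₂ h₁ h₂ _ _ _ hsum hbal η _ hnorm
  rw [det_left_momentum, Complex.ofReal_inj, hnorm, Real.sinh_two_mul]
  linear_combination (-(m₁ ^ 2 / (2 * Real.sinh ψ ^ 3 * Real.cosh ψ)))
    * sqrt_mul_exp_neg_mul_cosh m₁ m₂ ψ χ₁ χ₂ h₁.le h₂.le hsum hbal
end

section
/- Let m₁, m₂ > 0, ψ > 0, and θ ∈ ℝ. Set Z = sqrt((m₁ + m₂ e^{2ψ})(m₂ + m₁ e^{2ψ})), k₁₁ = -(m₁²/(2 sinh³ψ cosh ψ))(Z e^{-ψ} cos 2θ + m₁ + m₂ cosh 2ψ), k₂₂ = -(m₂²/(2 sinh³ψ cosh ψ))(Z e^{-ψ} cos 2θ + m₂ + m₁ cosh 2ψ), and let c₀ = (k₁₁/m₁² - k₂₂/m₂²)² + 2 coth(ψ) csch²(ψ) [ (k₁₁/m₁)(1 + m₂/m₁) + (k₂₂/m₂)(1 + m₁/m₂) ] + [ (m₁ + m₂) coth(ψ) csch²(ψ) ]². Then c₀ = -2 e^{-ψ} Γ(θ, ψ) csch⁶(ψ), where Γ(θ,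 ψ) = (m₁ + m₂) Z cos 2θ + ((1 + tanh ψ)/(2 cosh ψ)) (m₁ + m₂ cosh 2ψ)(m₂ + m₁ cosh 2ψ). -/
/-!
With `u = e^ψ`, every hyperbolic quantity in the statement is a rational function of `u`.
The square `(k₁₁/m₁² - k₂₂/m₂²)²` does not involve `Z`, so both sides are affine in
`Z cos 2θ`; hence the claim is an identity of rational functions in `u`, `m₁`, `m₂` and
`Z cos 2θ`, with `Z` treated as an arbitrary real.
-/

open Real

theorem Real.sinh_eq_exp_sq_sub_one_div (x : ℝ) : sinh x = (exp x ^ 2 - 1) / (2 * exp x) := by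
  rw [sinh_eq, exp_neg]
  field_simp

theorem Real.cosh_eq_exp_sq_add_one_div (x : ℝ) : cosh x = (exp x ^ 2 + 1) / (2 * exp x) := by
  rw [cosh_eq, exp_neg]
  field_simp

theorem Real.tanh_eq_exp_sq_sub_one_div (x : ℝ) : tanh x = (exp x ^ 2 - 1) / (exp x ^ 2 + 1) := by
  rw [tanh_eq_sinh_div_cosh, sinh_eq_exp_sq_sub_one_div, cosh_eq_exp_sq_add_one_div]
  field_simp

/-- the constant term `c₀` of the characteristic polynomial of the
linearisation at a relative equilibrium with separation `ψ` and phase `θ` satisfies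
`c₀ = -2 e^{-ψ} Γ(θ,ψ) csch⁶ψ`, where
`Γ(θ,ψ) = (m₁+m₂) Z cos 2θ + ((1+tanh ψ)/(2 cosh ψ))(m₁+m₂ cosh 2ψ)(m₂+m₁ cosh 2ψ)`. -/
theorem constant_term_equals_Gamma (m₁ m₂ ψ θ : ℝ) (hm₁ : 0 < m₁) (hm₂ : 0 < m₂)
    (hψ : 0 < ψ) :
    let Z := Real.sqrt ((m₁ + m₂ * Real.exp (2 * ψ)) * (m₂ + m₁ * Real.exp (2 * ψ)))
    let k₁₁ := -(m₁ ^ 2 / (2 * Real.sinh ψ ^ 3 * Real.cosh ψ))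
        * (Z * Real.exp (-ψ) * Real.cos (2 * θ) + m₁ + m₂ * Real.cosh (2 * ψ))
    let k₂₂ := -(m₂ ^ 2 / (2 * Real.sinh ψ ^ 3 * Real.cosh ψ))
        * (Z * Real.exp (-ψ) * Real.cos (2 * θ) + m₂ + m₁ * Real.cosh (2 * ψ))
    let c₀ := (k₁₁ / m₁ ^ 2 - k₂₂ / m₂ ^ 2) ^ 2
        + 2 * (Real.cosh ψ / Real.sinh ψ) * (1 / Real.sinh ψ) ^ 2
            * ((k₁₁ / m₁) * (1 + m₂ / m₁) + (k₂₂ / m₂) * (1 + m₁ / m₂))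
        + ((m₁ + m₂) * (Real.cosh ψ / Real.sinh ψ) * (1 / Real.sinh ψ) ^ 2) ^ 2
    let Γ := (m₁ + m₂) * Z * Real.cos (2 * θ)
        + ((1 + Real.tanh ψ) / (2 * Real.cosh ψ))
            * (m₁ + m₂ * Real.cosh (2 * ψ)) * (m₂ + m₁ * Real.cosh (2 * ψ))
    c₀ = -2 * Real.exp (-ψ) * Γ * (1 / Real.sinh ψ) ^ 6 := by
  intro Z k₁₁ k₂₂ c₀ Γ
  have hexp : exp ψ ^ 2 - 1 ≠ 0 := by
    have : 1 < exp ψ := one_lt_exp_iff.2 hψ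
    nlinarith
  clear_value Z
  simp only [c₀, Γ, k₁₁, k₂₂, cosh_two_mul]
  simp only [sinh_eq_exp_sq_sub_one_div, cosh_eq_exp_sq_add_one_div,
    tanh_eq_exp_sq_sub_one_div, exp_neg]
  field_simp
  ring
end

section
/- Let m₁, m₂ > 0, ψ > 0 and θ ∈ ℝ with cos 2θ ≥ 0, and set Z = sqrt((m₁ + m₂ e^{2ψ})(m₂ + m₁ e^{2ψ})) and Γ(θ, ψ) = (m₁ + m₂) Z cos 2θ + ((1 + tanh ψ)/(2 cosh ψ)) (m₁ + m₂ cosh 2ψ)(m₂ + m₁ cosh 2ψ). Then Γ(θ, ψ) > 0. In particular, every relative equilibrium of the gravitational 2-body problem on hyperbolic 3-space with cos 2θ ≥ 0 is nondegenerate (and is linearly unstable). -/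
theorem Gamma_pos_of_cos_nonneg_general (m₁ m₂ ψ θ : ℝ) (hm₁ : 0 < m₁) (hm₂ : 0 < m₂)
    (hθ : 0 ≤ Real.cos (2 * θ)) :
    0 < (m₁ + m₂)
          * Real.sqrt ((m₁ + m₂ * Real.exp (2 * ψ)) * (m₂ + m₁ * Real.exp (2 * ψ)))
          * Real.cos (2 * θ)
        + ((1 + Real.tanh ψ) / (2 * Real.cosh ψ))
          * (m₁ + m₂ * Real.cosh (2 * ψ)) * (m₂ + m₁ * Real.cosh (2 * ψ)) := by
  have hcos_term : 0 ≤ (m₁ + m₂)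
      * Real.sqrt ((m₁ + m₂ * Real.exp (2 * ψ)) * (m₂ + m₁ * Real.exp (2 * ψ)))
      * Real.cos (2 * θ) := by
    positivity
  have htanh : 0 < 1 + Real.tanh ψ := by linarith [Real.neg_one_lt_tanh ψ]
  have hcosh_term : 0 < ((1 + Real.tanh ψ) / (2 * Real.cosh ψ))
      * (m₁ + m₂ * Real.cosh (2 * ψ)) * (m₂ + m₁ * Real.cosh (2 * ψ)) := by
    positivity
  exact add_pos_of_nonneg_of_pos hcos_term hcosh_term

/-- for `cos 2θ ≥ 0` one has `Γ(θ,ψ) > 0`; in particular every relative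
equilibrium of the gravitational 2-body problem on `H³` with `cos 2θ ≥ 0` is
nondegenerate (and linearly unstable). -/
theorem Gamma_pos_of_cos_nonneg (m₁ m₂ ψ θ : ℝ) (hm₁ : 0 < m₁) (hm₂ : 0 < m₂)
    (hψ : 0 < ψ) (hθ : 0 ≤ Real.cos (2 * θ)) :
    0 < (m₁ + m₂)
          * Real.sqrt ((m₁ + m₂ * Real.exp (2 * ψ)) * (m₂ + m₁ * Real.exp (2 * ψ)))
          * Real.cos (2 * θ)
        + ((1 + Real.tanh ψ) / (2 * Real.cosh ψ))
          * (m₁ + m₂ * Real.cosh (2 * ψ)) * (m₂ + m₁ * Real.cosh (2 * ψ)) :=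
  Gamma_pos_of_cos_nonneg_general m₁ m₂ ψ θ hm₁ hm₂ hθ
end

section
/- Let m₁, m₂ > 0, and define Γ(θ, ψ) = (m₁ + m₂) Z cos 2θ + ((1 + tanh ψ)/(2 cosh ψ)) (m₁ + m₂ cosh 2ψ)(m₂ + m₁ cosh 2ψ) with Z = sqrt((m₁ + m₂ e^{2ψ})(m₂ + m₁ e^{2ψ})). Then: (a) there exists ψ_crit > 0 such that Γ(θ, ψ) > 0 for all ψ > ψ_crit and all θ ∈ ℝ; and (b) there exists ψ₀ > 0 such that Γ(θ, ψ) < 0 for all 0 < ψ < ψ₀ and all θ ∈ ℝ with cos 2θ = -1. -/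
/-!
Write `Γ = (m₁ + m₂) Z cos 2θ + P`. For `ψ ≥ 0` one has `Z ≤ (m₁ + m₂) e^{2ψ}`, while
`(1 + tanh ψ) / (2 cosh ψ) = e^ψ / (2 cosh² ψ) ≥ 1 / (2 e^ψ)` and `cosh 2ψ ≥ e^{2ψ} / 2` give
`P ≥ m₁ m₂ e^{3ψ} / 8`. Hence `Γ ≥ e^{2ψ} (m₁ m₂ e^ψ / 8 - (m₁ + m₂)²)`, positive once
`e^ψ > 8 (m₁ + m₂)² / (m₁ m₂)`. For elliptic phases `Γ = P - (m₁ + m₂) Z` is continuous in `ψ`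
and equals `-(m₁ + m₂)² / 2 < 0` at `ψ = 0`.
-/

open Real Set

theorem Real.one_add_tanh_div_two_cosh (ψ : ℝ) :
    (1 + tanh ψ) / (2 * cosh ψ) = exp ψ / (2 * cosh ψ ^ 2) := by
  have hc : cosh ψ ≠ 0 := (cosh_pos ψ).ne'
  rw [tanh_eq_sinh_div_cosh, ← cosh_add_sinh]
  field_simp

theorem Real.cosh_le_exp_of_nonneg {ψ : ℝ} (hψ : 0 ≤ ψ) : cosh ψ ≤ exp ψ := by
  rw [← sub_nonneg, exp_sub_cosh]
  exact sinh_nonneg_iff.2 hψ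

theorem Real.exp_div_two_le_cosh (ψ : ℝ) : exp ψ / 2 ≤ cosh ψ := by
  rw [cosh_eq]
  have := exp_pos (-ψ)
  linarith

namespace HyperbolicTwoBody

variable (m₁ m₂ : ℝ)

noncomputable def Z (ψ : ℝ) : ℝ :=
  √((m₁ + m₂ * exp (2 * ψ)) * (m₂ + m₁ * exp (2 * ψ)))

noncomputable def P (ψ : ℝ) : ℝ :=
  ((1 + tanh ψ) / (2 * cosh ψ)) * (m₁ + m₂ * cosh (2 * ψ)) * (m₂ + m₁ * cosh (2 * ψ))

noncomputable def gamma (θ ψ : ℝ) : ℝ := (m₁ + m₂) * Z m₁ m₂ ψ * cos (2 * θ) + P m₁ m₂ ψ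

variable {m₁ m₂}

theorem Z_nonneg (ψ : ℝ) : 0 ≤ Z m₁ m₂ ψ := sqrt_nonneg _

theorem continuous_Z : Continuous (Z m₁ m₂) := by
  unfold Z
  fun_prop

theorem Z_zero (h : 0 ≤ m₁ + m₂) : Z m₁ m₂ 0 = m₁ + m₂ := by
  rw [Z, mul_zero, exp_zero, mul_one, mul_one, add_comm m₂, ← sq, sqrt_sq h]

theorem Z_le (hm₁ : 0 ≤ m₁) (hm₂ : 0 ≤ m₂) {ψ : ℝ} (hψ : 0 ≤ ψ) :
    Z m₁ m₂ ψ ≤ (m₁ + m₂) * exp (2 * ψ) := by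
  have hE : 1 ≤ exp (2 * ψ) := one_le_exp (by linarith)
  have h₁ : m₁ + m₂ * exp (2 * ψ) ≤ (m₁ + m₂) * exp (2 * ψ) := by nlinarith
  have h₂ : m₂ + m₁ * exp (2 * ψ) ≤ (m₁ + m₂) * exp (2 * ψ) := by nlinarith
  refine sqrt_le_iff.2 ⟨by positivity, ?_⟩
  rw [sq]
  exact mul_le_mul h₁ h₂ (by positivity) (by positivity)

theorem P_eq (ψ : ℝ) : P m₁ m₂ ψ =
    exp ψ / (2 * cosh ψ ^ 2) * (m₁ + m₂ * cosh (2 * ψ)) * (m₂ + m₁ * cosh (2 * ψ)) := by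
  rw [P, one_add_tanh_div_two_cosh]

theorem P_zero : P m₁ m₂ 0 = (m₁ + m₂) ^ 2 / 2 := by
  simp only [P, tanh_zero, cosh_zero, mul_zero]
  ring

theorem continuous_P : Continuous (P m₁ m₂) := by
  have hc : ∀ ψ, 2 * cosh ψ ^ 2 ≠ 0 := fun ψ => by positivity
  simp only [funext P_eq]
  fun_prop (disch := exact hc _)

theorem le_P (hm₁ : 0 ≤ m₁) (hm₂ : 0 ≤ m₂) {ψ : ℝ} (hψ : 0 ≤ ψ) :
    m₁ * m₂ * exp ψ ^ 3 / 8 ≤ P m₁ m₂ ψ := by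
  have hE : exp (2 * ψ) = exp ψ ^ 2 := by rw [two_mul, exp_add, sq]
  have hf : 1 / (2 * exp ψ) ≤ exp ψ / (2 * cosh ψ ^ 2) := by
    rw [show 1 / (2 * exp ψ) = exp ψ / (2 * exp ψ ^ 2) by field_simp]
    gcongr
    exact cosh_le_exp_of_nonneg hψ
  have h₁ : m₂ * exp ψ ^ 2 / 2 ≤ m₁ + m₂ * cosh (2 * ψ) := by
    have := exp_div_two_le_cosh (2 * ψ); rw [hE] at this; nlinarith
  have h₂ : m₁ * exp ψ ^ 2 / 2 ≤ m₂ + m₁ * cosh (2 * ψ) := by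
    have := exp_div_two_le_cosh (2 * ψ); rw [hE] at this; nlinarith
  calc m₁ * m₂ * exp ψ ^ 3 / 8
      = 1 / (2 * exp ψ) * (m₂ * exp ψ ^ 2 / 2) * (m₁ * exp ψ ^ 2 / 2) := by
        field_simp; ring
    _ ≤ P m₁ m₂ ψ := by rw [P_eq]; gcongr

theorem P_sub_Z_le_gamma (hm : 0 ≤ m₁ + m₂) (θ ψ : ℝ) :
    P m₁ m₂ ψ - (m₁ + m₂) * Z m₁ m₂ ψ ≤ gamma m₁ m₂ θ ψ := by
  have hZ : 0 ≤ Z m₁ m₂ ψ := Z_nonneg ψ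
  have := mul_le_mul_of_nonneg_left (neg_one_le_cos (2 * θ)) (mul_nonneg hm hZ)
  rw [gamma]
  linarith

theorem gamma_of_cos_eq_neg_one {θ : ℝ} (hθ : cos (2 * θ) = -1) (ψ : ℝ) :
    gamma m₁ m₂ θ ψ = P m₁ m₂ ψ - (m₁ + m₂) * Z m₁ m₂ ψ := by
  rw [gamma, hθ]
  ring

theorem exists_gamma_pos_of_separation_gt (hm₁ : 0 < m₁) (hm₂ : 0 < m₂) :
    ∃ ψcrit, 0 < ψcrit ∧ ∀ ψ, ψcrit < ψ → ∀ θ, 0 < gamma m₁ m₂ θ ψ := by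
  set C := 8 * (m₁ + m₂) ^ 2 / (m₁ * m₂)
  have hC : 1 < C := by
    rw [one_lt_div (by positivity)]
    nlinarith [four_mul_le_sq_add m₁ m₂, mul_pos hm₁ hm₂]
  refine ⟨log C, log_pos hC, fun ψ hψ θ => ?_⟩
  have hψ₀ : 0 ≤ ψ := (log_pos hC).le.trans hψ.le
  have hgrowth : 8 * (m₁ + m₂) ^ 2 < m₁ * m₂ * exp ψ := by
    rw [log_lt_iff_lt_exp (by positivity), div_lt_iff₀ (by positivity)] at hψ
    linarith
  calc 0 < exp (2 * ψ) * (m₁ * m₂ * exp ψ / 8 - (m₁ + m₂) ^ 2) := by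
        have := exp_pos (2 * ψ)
        nlinarith
    _ = m₁ * m₂ * exp ψ ^ 3 / 8 - (m₁ + m₂) * ((m₁ + m₂) * exp (2 * ψ)) := by
        rw [two_mul, exp_add]
        ring
    _ ≤ P m₁ m₂ ψ - (m₁ + m₂) * Z m₁ m₂ ψ := by
        gcongr
        · exact le_P hm₁.le hm₂.le hψ₀
        · exact Z_le hm₁.le hm₂.le hψ₀
    _ ≤ gamma m₁ m₂ θ ψ := P_sub_Z_le_gamma (by positivity) θ ψ

theorem exists_gamma_neg_of_separation_lt (hm : 0 < m₁ + m₂) :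
    ∃ ψ₀, 0 < ψ₀ ∧ ∀ ψ, 0 < ψ → ψ < ψ₀ →
      ∀ θ, cos (2 * θ) = -1 → gamma m₁ m₂ θ ψ < 0 := by
  have hcont : Continuous fun ψ => P m₁ m₂ ψ - (m₁ + m₂) * Z m₁ m₂ ψ :=
    continuous_P.sub (continuous_const.mul continuous_Z)
  have hzero : P m₁ m₂ 0 - (m₁ + m₂) * Z m₁ m₂ 0 < 0 := by
    rw [P_zero, Z_zero hm.le]
    nlinarith
  have hnear := (hcont.continuousAt.eventually_lt continuousAt_const hzero).filter_mono
    (nhdsWithin_le_nhds (s := Ioi 0))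
  obtain ⟨ψ₀, hψ₀, hsub⟩ := mem_nhdsGT_iff_exists_Ioo_subset.1 hnear
  refine ⟨ψ₀, hψ₀, fun ψ hψ hψψ₀ θ hθ => ?_⟩
  rw [gamma_of_cos_eq_neg_one hθ]
  exact hsub ⟨hψ, hψψ₀⟩

end HyperbolicTwoBody

open HyperbolicTwoBody in
/-- (a) there is a `ψ_crit > 0` beyond which `Γ(θ,ψ) > 0` for all phases
`θ` (instability of widely separated relative equilibria); (b) there is a `ψ₀ > 0` such
that `Γ(θ,ψ) < 0` for all `0 < ψ < ψ₀` and all elliptic phases (`cos 2θ = -1`). -/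
theorem Gamma_sign_for_extreme_separations (m₁ m₂ : ℝ) (hm₁ : 0 < m₁) (hm₂ : 0 < m₂) :
    let Γ : ℝ → ℝ → ℝ := fun θ ψ =>
      (m₁ + m₂)
          * Real.sqrt ((m₁ + m₂ * Real.exp (2 * ψ)) * (m₂ + m₁ * Real.exp (2 * ψ)))
          * Real.cos (2 * θ)
        + ((1 + Real.tanh ψ) / (2 * Real.cosh ψ))
          * (m₁ + m₂ * Real.cosh (2 * ψ)) * (m₂ + m₁ * Real.cosh (2 * ψ))
    (∃ ψcrit : ℝ, 0 < ψcrit ∧ ∀ ψ : ℝ, ψcrit < ψ → ∀ θ : ℝ, 0 < Γ θ ψ)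
    ∧ (∃ ψ₀ : ℝ, 0 < ψ₀ ∧ ∀ ψ : ℝ, 0 < ψ → ψ < ψ₀ →
        ∀ θ : ℝ, Real.cos (2 * θ) = -1 → Γ θ ψ < 0) :=
  ⟨exists_gamma_pos_of_separation_gt hm₁ hm₂,
    exists_gamma_neg_of_separation_lt (add_pos hm₁ hm₂)⟩
end
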